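/- arXiv:1012.4962 — 7 statements merged into one kernel-verified Lean document; each statement's English description precedes it below -/
import Mathlib

section
/- The intersection of a p-system and a 1-system (in particular, a partition matroid) on the same ground set [n] is a (p+1)-system. -/
/-- `I` is a maximal independent subset of `A` in the family `Ω`. -/
def MaximalIn {m : ℕ} (Ω : Set (Finset (Fin m))) (A I : Finset (Fin m)) : Prop :=
  I ∈ Ω ∧ I ⊆ A ∧ ∀ J, I ⊆ J → J ⊆ A → J ∈ Ω → J = I

/-- `Ω` is a `p`-system. -/
def IsPSystem {m : ℕ} (Ω : Set (Finset (Fin m))) (p : ℝ) : Prop :=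
  ∀ A I J : Finset (Fin m), MaximalIn Ω A I → MaximalIn Ω A J →
    (I.card : ℝ) ≤ p * (J.card : ℝ)

def DownwardClosed {m : ℕ} (Ω : Set (Finset (Fin m))) : Prop :=
  ∀ A B : Finset (Fin m), A ⊆ B → B ∈ Ω → A ∈ Ω

lemma exists_maximalIn {m : ℕ} (Ω : Set (Finset (Fin m))) (A S : Finset (Fin m))
    (hS : S ∈ Ω) (hSA : S ⊆ A) : ∃ M, S ⊆ M ∧ MaximalIn Ω A M := by
  classical
  obtain ⟨M, hM, hmax⟩ := (A.powerset.filter (fun B => S ⊆ B ∧ B ∈ Ω)).exists_max_image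
    (fun B => B.card) ⟨S, by simp [Finset.mem_powerset, hSA, hS]⟩
  simp only [Finset.mem_filter, Finset.mem_powerset] at hM
  refine ⟨M, hM.2.1, hM.2.2, hM.1, fun K hMK hKA hK => ?_⟩
  exact (Finset.eq_of_subset_of_card_le hMK
    (hmax K (by simp [Finset.mem_filter, Finset.mem_powerset, hKA, hM.2.1.trans hMK, hK]))).symm

/-- The intersection of a `p`-system and a `1`-system (e.g. a
partition matroid) on the same ground set is a `(p+1)`-system. -/
theorem inter_pSystem_oneSystem (m : ℕ)
    (Ω₁ Ω₂ : Set (Finset (Fin m))) (p : ℝ)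
    (hd₁ : DownwardClosed Ω₁) (hd₂ : DownwardClosed Ω₂)
    (hne₁ : ∅ ∈ Ω₁) (hne₂ : ∅ ∈ Ω₂)
    (h₁ : IsPSystem Ω₁ p) (h₂ : IsPSystem Ω₂ 1) :
    IsPSystem (Ω₁ ∩ Ω₂) (p + 1) := by
  classical
  intro A I J hI hJ
  obtain ⟨⟨hIΩ₁, hIΩ₂⟩, hIA, hImax⟩ := hI
  obtain ⟨⟨hJΩ₁, hJΩ₂⟩, hJA, hJmax⟩ := hJ
  -- partition I \ J
  set I₁ : Finset (Fin m) := (I \ J).filter (fun x => insert x J ∉ Ω₁) with hI₁def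
  set I₂ : Finset (Fin m) := (I \ J) \ I₁ with hI₂def
  have hI₂prop : ∀ x ∈ I₂, insert x J ∉ Ω₂ := by
    intro x hx hmem
    simp only [hI₂def, hI₁def, Finset.mem_sdiff, Finset.mem_filter, not_and, not_not] at hx
    obtain ⟨hxIJ, hx2⟩ := hx
    have hxJ : x ∉ J := hxIJ.2
    have hxA : x ∈ A := hIA hxIJ.1
    have h1 : insert x J ∈ Ω₁ := hx2 hxIJ
    have := hJmax (insert x J) (Finset.subset_insert _ _)
      (Finset.insert_subset hxA hJA) ⟨h1, hmem⟩
    exact hxJ (this ▸ Finset.mem_insert_self x J)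
  have hI₁prop : ∀ x ∈ I₁, insert x J ∉ Ω₁ := by
    intro x hx; exact (Finset.mem_filter.mp hx).2
  -- J is maximal in Ω₁ within J ∪ I₁
  have hJmax₁ : MaximalIn Ω₁ (J ∪ I₁) J := by
    refine ⟨hJΩ₁, Finset.subset_union_left, fun K hJK hKJI hK => ?_⟩
    by_contra hne
    obtain ⟨x, hxK, hxJ⟩ := Finset.exists_of_ssubset (lt_of_le_of_ne hJK (Ne.symm hne))
    have hxI₁ : x ∈ I₁ := (Finset.mem_union.mp (hKJI hxK)).resolve_left hxJ
    exact hI₁prop x hxI₁ (hd₁ _ K (Finset.insert_subset hxK hJK) hK)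
  have hJmax₂ : MaximalIn Ω₂ (J ∪ I₂) J := by
    refine ⟨hJΩ₂, Finset.subset_union_left, fun K hJK hKJI hK => ?_⟩
    by_contra hne
    obtain ⟨x, hxK, hxJ⟩ := Finset.exists_of_ssubset (lt_of_le_of_ne hJK (Ne.symm hne))
    have hxI₂ : x ∈ I₂ := (Finset.mem_union.mp (hKJI hxK)).resolve_left hxJ
    exact hI₂prop x hxI₂ (hd₂ _ K (Finset.insert_subset hxK hJK) hK)
  -- extend (I ∩ J) ∪ I₁ to a maximal set M₁ in Ω₁ within J ∪ I₁
  have hI₁sub : I₁ ⊆ I \ J := Finset.filter_subset _ _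
  have hI₂sub : I₂ ⊆ I \ J := Finset.sdiff_subset
  have hS₁I : (I ∩ J) ∪ I₁ ⊆ I :=
    Finset.union_subset Finset.inter_subset_left (hI₁sub.trans Finset.sdiff_subset)
  have hS₂I : (I ∩ J) ∪ I₂ ⊆ I :=
    Finset.union_subset Finset.inter_subset_left (hI₂sub.trans Finset.sdiff_subset)
  have hS₁sub : (I ∩ J) ∪ I₁ ⊆ J ∪ I₁ :=
    Finset.union_subset_union Finset.inter_subset_right (le_refl _)
  have hS₂sub : (I ∩ J) ∪ I₂ ⊆ J ∪ I₂ :=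
    Finset.union_subset_union Finset.inter_subset_right (le_refl _)
  obtain ⟨M₁, hSM₁, hM₁⟩ := exists_maximalIn Ω₁ (J ∪ I₁) ((I ∩ J) ∪ I₁)
    (hd₁ _ I hS₁I hIΩ₁) hS₁sub
  obtain ⟨M₂, hSM₂, hM₂⟩ := exists_maximalIn Ω₂ (J ∪ I₂) ((I ∩ J) ∪ I₂)
    (hd₂ _ I hS₂I hIΩ₂) hS₂sub
  have hb₁ : (M₁.card : ℝ) ≤ p * J.card := h₁ (J ∪ I₁) M₁ J hM₁ hJmax₁
  have hb₂ : (M₂.card : ℝ) ≤ 1 * J.card := h₂ (J ∪ I₂) M₂ J hM₂ hJmax₂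
  -- cardinality bookkeeping
  have hd₁' : Disjoint (I ∩ J) I₁ :=
    Finset.disjoint_left.mpr fun x hx hx' =>
      (Finset.mem_sdiff.mp (hI₁sub hx')).2 (Finset.mem_inter.mp hx).2
  have hd₂' : Disjoint (I ∩ J) I₂ :=
    Finset.disjoint_left.mpr fun x hx hx' =>
      (Finset.mem_sdiff.mp (hI₂sub hx')).2 (Finset.mem_inter.mp hx).2
  have hcard₁ : ((I ∩ J).card + I₁.card : ℕ) ≤ M₁.card := by
    calc (I ∩ J).card + I₁.card = ((I ∩ J) ∪ I₁).card := (Finset.card_union_of_disjoint hd₁').symm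
    _ ≤ M₁.card := Finset.card_le_card hSM₁
  have hcard₂ : ((I ∩ J).card + I₂.card : ℕ) ≤ M₂.card := by
    calc (I ∩ J).card + I₂.card = ((I ∩ J) ∪ I₂).card := (Finset.card_union_of_disjoint hd₂').symm
    _ ≤ M₂.card := Finset.card_le_card hSM₂
  have hIcard : I.card ≤ ((I ∩ J).card + I₁.card) + ((I ∩ J).card + I₂.card) := by
    have h1 : I₂.card + I₁.card = (I \ J).card :=
      Finset.card_sdiff_add_card_eq_card hI₁sub
    have h2 : (I ∩ J).card + (I \ J).card = I.card := Finset.card_inter_add_card_sdiff I J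
    omega
  have : (I.card : ℝ) ≤ (M₁.card : ℝ) + (M₂.card : ℝ) := by
    have := hcard₁
    have := hcard₂
    push_cast
    exact_mod_cast le_trans (Nat.cast_le.mpr hIcard) (by push_cast; exact_mod_cast add_le_add hcard₁ hcard₂)
  calc (I.card : ℝ) ≤ (M₁.card : ℝ) + (M₂.card : ℝ) := this
    _ ≤ p * J.card + 1 * J.card := add_le_add hb₁ hb₂
    _ = (p + 1) * J.card := by ring
end

section
/- Let w : [n] → ℝ≥0 with Σ_{e∈τ} w(e) ≤ (3/2)·q for a finite set τ, where every singleton {e} with e ∈ τ satisfies w(e) ≤ 1 in each of q scaled knapsack constraints Σ w^i(e) ≤ 1 (with w = Σ_{i=1}^q w^i). Then τ can be partitioned into at most 3q+1 parts ω_1,…,ω_r (r ≤ 3q+1) such that each part satisfies all q knapsack constraints. -/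
/-- If every singleton of `τ` satisfies each of the `q` unit-capacity
knapsacks and the total combined weight of `τ` is at most `(3/2)·q`, then `τ` can
be partitioned into at most `3q+1` parts each satisfying all `q` knapsacks. -/
theorem partition_into_knapsack_feasible_parts
    (n q : ℕ) (hq : 1 ≤ q)
    (w : Fin q → Fin n → ℝ) (hw : ∀ i e, 0 ≤ w i e)
    (τ : Finset (Fin n))
    (hsing : ∀ e ∈ τ, ∀ i : Fin q, w i e ≤ 1)
    (htot : ∑ e ∈ τ, ∑ i : Fin q, w i e ≤ (3 / 2 : ℝ) * q) :
    ∃ (r : ℕ) (ω : Fin r → Finset (Fin n)),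
      r ≤ 3 * q + 1 ∧
      (∀ ℓ₁ ℓ₂ : Fin r, ℓ₁ ≠ ℓ₂ → Disjoint (ω ℓ₁) (ω ℓ₂)) ∧
      Finset.univ.biUnion ω = τ ∧
      (∀ (ℓ : Fin r) (i : Fin q), ∑ e ∈ ω ℓ, w i e ≤ 1) := by
  classical
  -- A valid partition of τ into feasible parts
  let Valid : Finset (Finset (Fin n)) → Prop := fun P =>
    P.biUnion id = τ ∧ (∀ A ∈ P, ∀ B ∈ P, A ≠ B → Disjoint A B) ∧
    (∀ A ∈ P, ∀ i : Fin q, ∑ e ∈ A, w i e ≤ 1)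
  have hex : ∃ k, ∃ P, Valid P ∧ P.card = k := by
    refine ⟨(τ.image fun e => ({e} : Finset (Fin n))).card,
      τ.image fun e => ({e} : Finset (Fin n)), ⟨?_, ?_, ?_⟩, rfl⟩
    · ext x; simp
    · intro A hA B hB hAB
      simp only [Finset.mem_image] at hA hB
      obtain ⟨a, _, rfl⟩ := hA; obtain ⟨b, _, rfl⟩ := hB
      simp only [Finset.disjoint_singleton]
      intro h; exact hAB (by rw [h])
    · intro A hA i
      simp only [Finset.mem_image] at hA
      obtain ⟨a, ha, rfl⟩ := hA
      simpa using hsing a ha i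
  obtain ⟨P, ⟨hunion, hdisj, hfeas⟩, hcard⟩ := Nat.find_spec hex
  have hmin : ∀ P', Valid P' → Nat.find hex ≤ P'.card := by
    intro P' hP'
    exact Nat.find_le ⟨P', hP', rfl⟩
  -- the empty set is not a part
  have hne : (∅ : Finset (Fin n)) ∉ P := by
    intro h0
    have hV : Valid (P.erase ∅) := by
      refine ⟨?_, ?_, ?_⟩
      · rw [← hunion]; ext x
        simp only [Finset.mem_biUnion, Finset.mem_erase, id]
        constructor
        · rintro ⟨A, ⟨_, hA⟩, hx⟩; exact ⟨A, hA, hx⟩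
        · rintro ⟨A, hA, hx⟩
          exact ⟨A, ⟨fun h => by simp [h] at hx, hA⟩, hx⟩
      · intro A hA B hB
        exact hdisj A (Finset.mem_of_mem_erase hA) B (Finset.mem_of_mem_erase hB)
      · intro A hA; exact hfeas A (Finset.mem_of_mem_erase hA)
    have := hmin _ hV
    have := Finset.card_erase_lt_of_mem h0
    omega
  -- no two parts can be merged
  have hkey : ∀ A ∈ P, ∀ B ∈ P, A ≠ B →
      ∃ i : Fin q, 1 < (∑ e ∈ A, w i e) + ∑ e ∈ B, w i e := by
    intro A hA B hB hAB
    by_contra hcon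
    push_neg at hcon
    have hAne : A.Nonempty := Finset.nonempty_iff_ne_empty.2 (fun h => hne (h ▸ hA))
    have hdAB : Disjoint A B := hdisj A hA B hB hAB
    set P' : Finset (Finset (Fin n)) := insert (A ∪ B) ((P.erase A).erase B) with hP'
    have hnotmem : A ∪ B ∉ (P.erase A).erase B := by
      intro hmem
      have hC := Finset.mem_of_mem_erase (Finset.mem_of_mem_erase hmem)
      have hCA : A ∪ B ≠ A := (Finset.mem_erase.1 (Finset.mem_of_mem_erase hmem)).1
      have hd : Disjoint (A ∪ B) A := hdisj _ hC A hA hCA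
      obtain ⟨a, ha⟩ := hAne
      exact (Finset.disjoint_left.1 hd (Finset.mem_union_left _ ha)) ha
    have hV : Valid P' := by
      refine ⟨?_, ?_, ?_⟩
      · rw [← hunion]; ext x
        simp only [hP', Finset.mem_biUnion, Finset.mem_insert, Finset.mem_erase, id,
          Finset.mem_union]
        constructor
        · rintro ⟨C, hC, hx⟩
          rcases hC with rfl | ⟨hCB, hCA, hC⟩
          · rcases Finset.mem_union.1 hx with hx | hx
            exacts [⟨A, hA, hx⟩, ⟨B, hB, hx⟩]
          · exact ⟨C, hC, hx⟩
        · rintro ⟨C, hC, hx⟩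
          by_cases h1 : C = A
          · exact ⟨A ∪ B, Or.inl rfl, Finset.mem_union_left _ (h1 ▸ hx)⟩
          by_cases h2 : C = B
          · exact ⟨A ∪ B, Or.inl rfl, Finset.mem_union_right _ (h2 ▸ hx)⟩
          · exact ⟨C, Or.inr ⟨h2, h1, hC⟩, hx⟩
      · intro C hC D hD hCD
        simp only [hP', Finset.mem_insert, Finset.mem_erase] at hC hD
        rcases hC with rfl | ⟨hCB, hCA, hC⟩
        · rcases hD with rfl | ⟨hDB, hDA, hD⟩
          · exact absurd rfl hCD
          · exact Finset.disjoint_union_left.2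
              ⟨hdisj A hA D hD (fun h => hDA h.symm),
               hdisj B hB D hD (fun h => hDB h.symm)⟩
        · rcases hD with rfl | ⟨hDB, hDA, hD⟩
          · exact (Finset.disjoint_union_left.2
              ⟨hdisj A hA C hC (fun h => hCA h.symm),
               hdisj B hB C hC (fun h => hCB h.symm)⟩).symm
          · exact hdisj C hC D hD hCD
      · intro C hC i
        simp only [hP', Finset.mem_insert, Finset.mem_erase] at hC
        rcases hC with rfl | ⟨_, _, hC⟩
        · rw [Finset.sum_union hdAB]; exact hcon i
        · exact hfeas C hC i
    have hcard' : P'.card < P.card := by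
      have hBmem : B ∈ P.erase A := Finset.mem_erase.2 ⟨fun h => hAB h.symm, hB⟩
      have h1 : ((P.erase A).erase B).card = P.card - 2 := by
        rw [Finset.card_erase_of_mem hBmem, Finset.card_erase_of_mem hA]; omega
      have h2 : P'.card = P.card - 2 + 1 := by
        rw [hP', Finset.card_insert_of_notMem hnotmem, h1]
      have h3 : 2 ≤ P.card := by
        have : ({A, B} : Finset (Finset (Fin n))) ⊆ P := by
          intro x hx; simp only [Finset.mem_insert, Finset.mem_singleton] at hx
          rcases hx with rfl | rfl; exacts [hA, hB]
        have := Finset.card_le_card this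
        rwa [Finset.card_insert_of_notMem (by simpa using hAB),
          Finset.card_singleton] at this
      omega
    have := hmin _ hV
    omega
  -- counting
  set r := P.card with hr
  set T : Finset (Fin n) → ℝ := fun A => ∑ e ∈ A, ∑ i : Fin q, w i e with hT
  have hS : ∑ A ∈ P, T A ≤ (3 / 2 : ℝ) * q := by
    have : ∑ A ∈ P, T A = ∑ e ∈ τ, ∑ i : Fin q, w i e := by
      rw [← hunion,
        Finset.sum_biUnion (t := id) (fun A hA B hB hAB => hdisj A hA B hB hAB)]
      rfl
    rw [this]; exact htot
  have hTnn : ∀ A, 0 ≤ T A := fun A =>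
    Finset.sum_nonneg fun e _ => Finset.sum_nonneg fun i _ => hw i e
  have hpair : ∀ A ∈ P, ∀ B ∈ P, A ≠ B → 1 < T A + T B := by
    intro A hA B hB hAB
    obtain ⟨i, hi⟩ := hkey A hA B hB hAB
    have h1 : ∑ e ∈ A, w i e ≤ T A :=
      Finset.sum_le_sum fun e _ =>
        Finset.single_le_sum (fun j _ => hw j e) (Finset.mem_univ i)
    have h2 : ∑ e ∈ B, w i e ≤ T B :=
      Finset.sum_le_sum fun e _ =>
        Finset.single_le_sum (fun j _ => hw j e) (Finset.mem_univ i)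
    linarith
  have hrle : r ≤ 3 * q + 1 := by
    rcases le_or_gt r 1 with h | h
    · omega
    · -- r ≥ 2 : averaging
      have hPne : P.Nonempty := Finset.card_pos.1 (by omega)
      have hstep : ∀ A ∈ P, ((r : ℝ) - 1) <
          ∑ B ∈ P.erase A, (T A + T B) := by
        intro A hA
        have hEne : (P.erase A).Nonempty := by
          rw [← Finset.card_pos, Finset.card_erase_of_mem hA]; omega
        have := Finset.sum_lt_sum_of_nonempty hEne
          (f := fun _ => (1 : ℝ)) (g := fun B => T A + T B)
          (fun B hB => hpair A hA B (Finset.mem_of_mem_erase hB)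
            (fun h => (Finset.mem_erase.1 hB).1 h.symm))
        rwa [Finset.sum_const, Finset.card_erase_of_mem hA, nsmul_eq_mul, mul_one,
          Nat.cast_sub (by omega), Nat.cast_one] at this
      have hbig : (r : ℝ) * ((r : ℝ) - 1) <
          ∑ A ∈ P, ∑ B ∈ P.erase A, (T A + T B) := by
        have := Finset.sum_lt_sum_of_nonempty hPne
          (f := fun _ => ((r : ℝ) - 1)) (g := fun A => ∑ B ∈ P.erase A, (T A + T B))
          hstep
        rwa [Finset.sum_const, nsmul_eq_mul, ← hr] at this
      have hcomp : ∑ A ∈ P, ∑ B ∈ P.erase A, (T A + T B)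
          = (2 * (r : ℝ) - 2) * ∑ A ∈ P, T A := by
        have : ∀ A ∈ P, ∑ B ∈ P.erase A, (T A + T B)
            = ((r : ℝ) - 1) * T A + (∑ C ∈ P, T C - T A) := by
          intro A hA
          rw [Finset.sum_add_distrib, Finset.sum_const, Finset.card_erase_of_mem hA,
            nsmul_eq_mul, Finset.sum_erase_eq_sub hA,
            Nat.cast_sub (by omega), Nat.cast_one]
        rw [Finset.sum_congr rfl this, Finset.sum_add_distrib, Finset.sum_sub_distrib,
          Finset.sum_const, ← Finset.mul_sum, nsmul_eq_mul, ← hr]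
        ring
      have hfin : (r : ℝ) * ((r : ℝ) - 1) < (2 * (r : ℝ) - 2) * ((3 / 2 : ℝ) * q) := by
        calc (r : ℝ) * ((r : ℝ) - 1) < (2 * (r : ℝ) - 2) * ∑ A ∈ P, T A := by
              rw [← hcomp]; exact hbig
          _ ≤ (2 * (r : ℝ) - 2) * ((3 / 2 : ℝ) * q) := by
              apply mul_le_mul_of_nonneg_left hS
              have : (2 : ℝ) ≤ r := by exact_mod_cast h
              linarith
      have hrlt : (r : ℝ) < 3 * q := by
        have h2 : (0 : ℝ) < (r : ℝ) - 1 := by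
          have : (2 : ℝ) ≤ r := by exact_mod_cast h
          linarith
        nlinarith
      have : r < 3 * q := by exact_mod_cast hrlt
      omega
  -- package
  refine ⟨r, fun ℓ => ((P.equivFin.symm ℓ : {x // x ∈ P}) : Finset (Fin n)), hrle, ?_, ?_, ?_⟩
  · intro ℓ₁ ℓ₂ hℓ
    apply hdisj _ (P.equivFin.symm ℓ₁).2 _ (P.equivFin.symm ℓ₂).2
    intro hEq
    exact hℓ (by
      have : P.equivFin.symm ℓ₁ = P.equivFin.symm ℓ₂ := Subtype.ext hEq
      simpa using congrArg P.equivFin this)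
  · ext x
    simp only [Finset.mem_biUnion, Finset.mem_univ, true_and]
    constructor
    · rintro ⟨ℓ, hx⟩
      rw [← hunion]
      exact Finset.mem_biUnion.2 ⟨_, (P.equivFin.symm ℓ).2, hx⟩
    · intro hx
      rw [← hunion] at hx
      obtain ⟨A, hA, hxA⟩ := Finset.mem_biUnion.1 hx
      refine ⟨P.equivFin ⟨A, hA⟩, ?_⟩
      simpa using hxA
  · intro ℓ i
    exact hfeas _ (P.equivFin.symm ℓ).2 i
end

section
/- Suppose a partition of a finite set τ into r parts has the property that for any two distinct parts ω, ω', the merged part ω ∪ ω' violates some knapsack, i.e., Σ_{e∈ω∪ω'} W(e) > 1 where W(e) = Σ_{i=1}^q w^i(e). If Σ_{e∈τ} W(e) ≤ (3/2)q then r < 3q + 2. -/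
/-- If a partition of `τ` into `r` nonempty parts has the property
that any two distinct parts have combined weight exceeding 1, and the total
weight of `τ` is at most `(3/2)·q`, then `r < 3q + 2`. -/
theorem unmergeable_partition_size_bound
    (n q : ℕ) (W : Fin n → ℝ) (hW : ∀ e, 0 ≤ W e)
    (τ : Finset (Fin n)) (P : Finset (Finset (Fin n)))
    (hne : ∀ ω ∈ P, ω.Nonempty)
    (hdisj : ∀ ω ∈ P, ∀ ω' ∈ P, ω ≠ ω' → Disjoint ω ω')
    (hunion : P.biUnion id = τ)
    (hpair : ∀ ω ∈ P, ∀ ω' ∈ P, ω ≠ ω' → 1 < ∑ e ∈ ω ∪ ω', W e)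
    (htot : ∑ e ∈ τ, W e ≤ (3 / 2 : ℝ) * q) :
    (P.card : ℝ) < 3 * q + 2 := by
  classical
  set f : Finset (Fin n) → ℝ := fun ω => ∑ e ∈ ω, W e with hf
  -- total over parts equals total over τ
  have hsum : ∑ ω ∈ P, f ω = ∑ e ∈ τ, W e := by
    rw [← hunion]
    exact (Finset.sum_biUnion (t := id) (fun ω hω ω' hω' hne' => hdisj ω hω ω' hω' hne')).symm
  -- the light parts
  set L : Finset (Finset (Fin n)) := P.filter (fun ω => f ω ≤ 1/2) with hL
  have hLcard : L.card ≤ 1 := by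
    by_contra h
    push_neg at h
    obtain ⟨ω, hω, ω', hω', hne'⟩ := Finset.one_lt_card.mp h
    have hωP := (Finset.mem_filter.mp hω)
    have hω'P := (Finset.mem_filter.mp hω')
    have hp := hpair ω hωP.1 ω' hω'P.1 hne'
    have hd := hdisj ω hωP.1 ω' hω'P.1 hne'
    rw [Finset.sum_union hd] at hp
    have : (1:ℝ) < 1/2 + 1/2 := lt_of_lt_of_le hp (add_le_add hωP.2 hω'P.2)
    norm_num at this
  set H : Finset (Finset (Fin n)) := P.filter (fun ω => ¬ f ω ≤ 1/2) with hH
  have hsplit : H.card + L.card = P.card := by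
    rw [hH, hL]
    have := Finset.card_filter_add_card_filter_not (s := P) (p := fun ω => ¬ f ω ≤ 1/2)
    simpa using this
  have hHlb : (H.card : ℝ) * (1/2) ≤ ∑ ω ∈ H, f ω := by
    have := Finset.card_nsmul_le_sum H f (1/2) (by
      intro ω hω
      have := (Finset.mem_filter.mp hω).2
      push_neg at this
      exact le_of_lt this)
    simpa [mul_comm, nsmul_eq_mul] using this
  have hHP : H ⊆ P := Finset.filter_subset _ _
  have hHle : ∑ ω ∈ H, f ω ≤ ∑ ω ∈ P, f ω := by
    apply Finset.sum_le_sum_of_subset_of_nonneg hHP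
    intro ω _ _
    exact Finset.sum_nonneg fun e _ => hW e
  have key : (H.card : ℝ) * (1/2) ≤ (3/2 : ℝ) * q := by
    calc (H.card : ℝ) * (1/2) ≤ ∑ ω ∈ H, f ω := hHlb
      _ ≤ ∑ ω ∈ P, f ω := hHle
      _ = ∑ e ∈ τ, W e := hsum
      _ ≤ (3/2 : ℝ) * q := htot
  have hHq : (H.card : ℝ) ≤ 3 * q := by nlinarith
  have : (P.card : ℝ) ≤ (H.card : ℝ) + 1 := by
    have : (P.card : ℝ) = (H.card : ℝ) + (L.card : ℝ) := by
      rw [← hsplit]; push_cast; ring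
    rw [this]
    have : (L.card : ℝ) ≤ 1 := by exact_mod_cast hLcard
    linarith
  linarith
end

section
/- In the construction of Lemma 3.3 (knapsack to partition matroids), any set X feasible for one of the constructed partition matroids P_τ has total knapsack weight at most (1+6δ)·B, where δ = ε/6. Concretely: if w_i ≤ B for all i, elements are grouped so that group S_0 = {i : w_i ≤ δB/n} and S_k = {i : δB/n·(1+δ)^{k−1} < w_i ≤ δB/n·(1+δ)^k} for 1 ≤ k ≤ G, and X satisfies |X ∩ S_k| ≤ ⌊n(U_k+1)/(G(1+δ)^{k−1})⌋ for integers U_k ≥ 0 with Σ_k U_k = ⌈G/δ⌉, then Σ_{i∈X} w_i ≤ (1+6δ)·B. -/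
private lemma sum_biUnion_le_aux {α : Type*} [DecidableEq α] (f : α → ℝ)
    (hf : ∀ a, 0 ≤ f a) (s : Finset ℕ) (t : ℕ → Finset α) :
    ∑ a ∈ s.biUnion t, f a ≤ ∑ k ∈ s, ∑ a ∈ t k, f a := by
  induction s using Finset.induction_on with
  | empty => simp
  | @insert k s hk ih =>
    rw [Finset.biUnion_insert, Finset.sum_insert hk]
    have h1 : ∑ a ∈ t k ∪ s.biUnion t, f a ≤ ∑ a ∈ t k, f a + ∑ a ∈ s.biUnion t, f a := by
      have := Finset.sum_union_inter (s₁ := t k) (s₂ := s.biUnion t) (f := f)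
      have h2 : 0 ≤ ∑ a ∈ t k ∩ s.biUnion t, f a := Finset.sum_nonneg fun a _ => hf a
      linarith
    linarith

/-- In the knapsack-to-partition-matroid construction, any set `X`
feasible for one of the constructed partition matroids `P_τ` has total knapsack
weight at most `(1 + 6δ)·B`. -/
theorem partition_matroid_feasible_weight_bound
    (n G : ℕ) (hn : 1 ≤ n) (hG : 1 ≤ G)
    (w : Fin n → ℝ) (B δ : ℝ)
    (hδ : 0 < δ) (hδ1 : δ ≤ 1) (hB : 0 < B)
    (hw : ∀ i, 0 ≤ w i) (hwB : ∀ i, w i ≤ B)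
    (β : ℝ) (hβ : β = δ * B / n)
    (S : ℕ → Finset (Fin n))
    (hS0 : S 0 = Finset.univ.filter (fun i => w i ≤ β))
    (hSk : ∀ k, 1 ≤ k → k ≤ G →
      S k = Finset.univ.filter
        (fun i => β * (1 + δ) ^ (k - 1) < w i ∧ w i ≤ β * (1 + δ) ^ k))
    (U : ℕ → ℕ)
    (hU : ∑ k ∈ Finset.Icc 1 G, U k = ⌈(G : ℝ) / δ⌉₊)
    (X : Finset (Fin n))
    (hcover : ∀ i ∈ X, ∃ k ≤ G, i ∈ S k)
    (hcard : ∀ k, 1 ≤ k → k ≤ G →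
      (X ∩ S k).card ≤ ⌊(n : ℝ) * (U k + 1) / (G * (1 + δ) ^ (k - 1))⌋₊) :
    ∑ i ∈ X, w i ≤ (1 + 6 * δ) * B := by
  have hnpos : (0:ℝ) < n := by exact_mod_cast hn
  have hGpos : (0:ℝ) < G := by exact_mod_cast hG
  have hβpos : 0 < β := by rw [hβ]; positivity
  have h1δ : (0:ℝ) < 1 + δ := by linarith
  -- step 1: sum over X ≤ sum over groups
  have hstep1 : ∑ i ∈ X, w i ≤ ∑ k ∈ Finset.range (G+1), ∑ i ∈ X ∩ S k, w i := by
    calc ∑ i ∈ X, w i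
        ≤ ∑ i ∈ (Finset.range (G+1)).biUnion (fun k => X ∩ S k), w i := by
          apply Finset.sum_le_sum_of_subset_of_nonneg
          · intro i hi
            obtain ⟨k, hk, hks⟩ := hcover i hi
            exact Finset.mem_biUnion.mpr ⟨k, Finset.mem_range.mpr (Nat.lt_succ_of_le hk),
              Finset.mem_inter.mpr ⟨hi, hks⟩⟩
          · intro i _ _; exact hw i
      _ ≤ _ := sum_biUnion_le_aux w hw _ _
  -- bound for group 0
  have h0 : ∑ i ∈ X ∩ S 0, w i ≤ δ * B := by
    have hle : ∑ i ∈ X ∩ S 0, w i ≤ (X ∩ S 0).card • β := by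
      apply Finset.sum_le_card_nsmul
      intro i hi
      have := (Finset.mem_inter.mp hi).2
      rw [hS0, Finset.mem_filter] at this
      exact this.2
    have hcard0 : ((X ∩ S 0).card : ℝ) ≤ n := by
      exact_mod_cast (Finset.card_le_univ (X ∩ S 0)).trans_eq (Finset.card_fin n)
    rw [nsmul_eq_mul] at hle
    calc ∑ i ∈ X ∩ S 0, w i ≤ ((X ∩ S 0).card : ℝ) * β := hle
      _ ≤ n * β := by nlinarith
      _ = δ * B := by rw [hβ]; field_simp
  -- bound for groups k ≥ 1
  have hk : ∀ k, 1 ≤ k → k ≤ G →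
      ∑ i ∈ X ∩ S k, w i ≤ δ * B * (1 + δ) * (U k + 1) / G := by
    intro k hk1 hkG
    have hpow : (0:ℝ) < (1 + δ) ^ (k-1) := pow_pos h1δ _
    have hle : ∑ i ∈ X ∩ S k, w i ≤ (X ∩ S k).card • (β * (1 + δ) ^ k) := by
      apply Finset.sum_le_card_nsmul
      intro i hi
      have := (Finset.mem_inter.mp hi).2
      rw [hSk k hk1 hkG, Finset.mem_filter] at this
      exact this.2.2
    rw [nsmul_eq_mul] at hle
    have hcardk : ((X ∩ S k).card : ℝ) ≤ (n : ℝ) * (U k + 1) / (G * (1 + δ) ^ (k - 1)) := by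
      have h1 := hcard k hk1 hkG
      have h2 : (⌊(n : ℝ) * (U k + 1) / (G * (1 + δ) ^ (k - 1))⌋₊ : ℝ)
          ≤ (n : ℝ) * (U k + 1) / (G * (1 + δ) ^ (k - 1)) :=
        Nat.floor_le (by positivity)
      calc ((X ∩ S k).card : ℝ) ≤ _ := by exact_mod_cast h1
        _ ≤ _ := h2
    have hpowk : (1 + δ) ^ k = (1 + δ) ^ (k - 1) * (1 + δ) := by
      conv_lhs => rw [show k = (k - 1) + 1 from (Nat.succ_pred_eq_of_pos hk1).symm]
      rw [pow_succ]
    calc ∑ i ∈ X ∩ S k, w i ≤ ((X ∩ S k).card : ℝ) * (β * (1 + δ) ^ k) := hle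
      _ ≤ ((n : ℝ) * (U k + 1) / (G * (1 + δ) ^ (k - 1))) * (β * (1 + δ) ^ k) := by
          apply mul_le_mul_of_nonneg_right hcardk (by positivity)
      _ = δ * B * (1 + δ) * (U k + 1) / G := by
          rw [hpowk, hβ]; field_simp
  -- sum the bounds
  have hset : Finset.range (G+1) = insert 0 (Finset.Icc 1 G) := by
    ext x; simp [Nat.lt_succ_iff]; omega
  have h0notin : (0:ℕ) ∉ Finset.Icc 1 G := by simp
  have hsum1 : ∑ k ∈ Finset.range (G+1), ∑ i ∈ X ∩ S k, w i
      ≤ δ * B + ∑ k ∈ Finset.Icc 1 G, δ * B * (1 + δ) * (U k + 1) / G := by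
    rw [hset, Finset.sum_insert h0notin]
    refine add_le_add h0 (Finset.sum_le_sum fun k hkm => ?_)
    obtain ⟨hk1, hkG⟩ := Finset.mem_Icc.mp hkm
    exact hk k hk1 hkG
  set C : ℕ := ⌈(G : ℝ) / δ⌉₊ with hCdef
  have hsum2 : ∑ k ∈ Finset.Icc 1 G, δ * B * (1 + δ) * (U k + 1) / G
      = δ * B * (1 + δ) * ((C : ℝ) + G) / G := by
    rw [← Finset.sum_div, ← Finset.mul_sum]
    congr 1
    congr 1
    rw [Finset.sum_add_distrib]
    push_cast [← hU]
    simp [Nat.card_Icc]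
  have hC : (C : ℝ) ≤ (G : ℝ) / δ + 1 :=
    le_of_lt (Nat.ceil_lt_add_one (by positivity))
  have hCδ : δ * (C : ℝ) ≤ (G : ℝ) + δ := by
    have := mul_le_mul_of_nonneg_left hC hδ.le
    rw [mul_add, mul_div_cancel₀ _ (ne_of_gt hδ)] at this
    linarith
  have hfinal : δ * B * (1 + δ) * ((C : ℝ) + G) / G ≤ (1 + 5 * δ) * B := by
    rw [div_le_iff₀ hGpos]
    have hG1 : (1:ℝ) ≤ G := by exact_mod_cast hG
    have hbr : δ * (1 + δ) * ((C : ℝ) + G) ≤ (1 + 5 * δ) * G := by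
      nlinarith [mul_le_mul_of_nonneg_left hCδ h1δ.le,
        mul_nonneg hδ.le (sub_nonneg.mpr hG1),
        mul_nonneg (mul_nonneg hδ.le (sub_nonneg.mpr hδ1)) hGpos.le,
        mul_nonneg hδ.le (by linarith : (0:ℝ) ≤ (G:ℝ) - δ)]
    nlinarith [mul_le_mul_of_nonneg_left hbr hB.le]
  calc ∑ i ∈ X, w i ≤ _ := hstep1
    _ ≤ δ * B + ∑ k ∈ Finset.Icc 1 G, δ * B * (1 + δ) * (U k + 1) / G := hsum1
    _ = δ * B + δ * B * (1 + δ) * ((C : ℝ) + G) / G := by rw [hsum2]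
    _ ≤ δ * B + (1 + 5 * δ) * B := by linarith
    _ = (1 + 6 * δ) * B := by ring
end

section
/- In the construction of Lemma 3.3, every set Y with Σ_{i∈Y} w_i ≤ B is independent in at least one of the constructed partition matroids: there exists an integer partition τ = (U_1,…,U_G) of ⌈G/δ⌉ with |Y ∩ S_k| ≤ N_k(τ) for all 1 ≤ k ≤ G. -/
/-- In the knapsack-to-partition-matroid construction, every set `Y`
satisfying the knapsack constraint is independent in at least one of the
constructed partition matroids. -/
theorem knapsack_feasible_in_some_partition_matroid
    (n G : ℕ) (hn : 1 ≤ n) (hG : 1 ≤ G)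
    (w : Fin n → ℝ) (B δ : ℝ)
    (hδ : 0 < δ) (hδ1 : δ ≤ 1) (hB : 0 < B)
    (hw : ∀ i, 0 ≤ w i)
    (β : ℝ) (hβ : β = δ * B / n)
    (S : ℕ → Finset (Fin n))
    (hSk : ∀ k, 1 ≤ k → k ≤ G →
      S k = Finset.univ.filter
        (fun i => β * (1 + δ) ^ (k - 1) < w i ∧ w i ≤ β * (1 + δ) ^ k))
    (Y : Finset (Fin n)) (hY : ∑ i ∈ Y, w i ≤ B) :
    ∃ U : ℕ → ℕ,
      (∑ k ∈ Finset.Icc 1 G, U k = ⌈(G : ℝ) / δ⌉₊) ∧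
      ∀ k, 1 ≤ k → k ≤ G →
        (Y ∩ S k).card ≤ ⌊(n : ℝ) * (U k + 1) / (G * (1 + δ) ^ (k - 1))⌋₊ := by
  classical
  have hn0 : (0:ℝ) < n := by exact_mod_cast hn
  have hG0 : (0:ℝ) < G := by exact_mod_cast hG
  have hβpos : 0 < β := by rw [hβ]; positivity
  have hβn : β * n = δ * B := by rw [hβ]; field_simp
  set Q : ℕ → ℝ := fun k => ∑ i ∈ Y ∩ S k, w i with hQdef
  have hQnonneg : ∀ k, 0 ≤ Q k := fun k => Finset.sum_nonneg fun i _ => hw i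
  set F : ℕ → ℕ := fun k => ⌊Q k * G / (δ * B)⌋₊ with hFdef
  -- disjointness of different groups
  have key : ∀ k l, 1 ≤ k → k ≤ G → 1 ≤ l → l ≤ G → k < l →
      ∀ i : Fin n, i ∈ S k → i ∈ S l → False := by
    intro k l hk1 hkG hl1 hlG hkl i hik hil
    rw [hSk k hk1 hkG] at hik
    rw [hSk l hl1 hlG] at hil
    simp only [Finset.mem_filter] at hik hil
    have hkl' : k ≤ l - 1 := by omega
    have hpow : (1 + δ) ^ k ≤ (1 + δ) ^ (l - 1) :=
      pow_le_pow_right₀ (by linarith) hkl'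
    have h1 : β * (1 + δ) ^ k ≤ β * (1 + δ) ^ (l - 1) :=
      mul_le_mul_of_nonneg_left hpow hβpos.le
    linarith [hik.2.2, hil.2.1]
  have hdisj : (↑(Finset.Icc 1 G) : Set ℕ).PairwiseDisjoint
      (fun k => Y ∩ S k) := by
    intro k hk l hl hkl
    simp only [Finset.coe_Icc, Set.mem_Icc] at hk hl
    simp only [Function.onFun]
    rw [Finset.disjoint_left]
    intro i hik hil
    have hik' : i ∈ S k := (Finset.mem_inter.mp hik).2
    have hil' : i ∈ S l := (Finset.mem_inter.mp hil).2
    rcases lt_or_gt_of_ne hkl with h | h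
    · exact key k l hk.1 hk.2 hl.1 hl.2 h i hik' hil'
    · exact key l k hl.1 hl.2 hk.1 hk.2 h i hil' hik'
  have hQsum : ∑ k ∈ Finset.Icc 1 G, Q k ≤ B := by
    have := (Finset.sum_biUnion (f := w) hdisj).symm
    calc ∑ k ∈ Finset.Icc 1 G, Q k
        = ∑ i ∈ (Finset.Icc 1 G).biUnion (fun k => Y ∩ S k), w i := this
      _ ≤ ∑ i ∈ Y, w i := by
          apply Finset.sum_le_sum_of_subset_of_nonneg
          · intro i hi
            obtain ⟨k, _, hik⟩ := Finset.mem_biUnion.mp hi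
            exact (Finset.mem_inter.mp hik).1
          · intro i _ _; exact hw i
      _ ≤ B := hY
  have hδB : (0:ℝ) < δ * B := by positivity
  have hFle : ∀ k, (F k : ℝ) ≤ Q k * G / (δ * B) := fun k =>
    Nat.floor_le (by have := hQnonneg k; positivity)
  have hFsum : (↑(∑ k ∈ Finset.Icc 1 G, F k) : ℝ) ≤ (G : ℝ) / δ := by
    push_cast
    calc (∑ k ∈ Finset.Icc 1 G, (F k : ℝ))
        ≤ ∑ k ∈ Finset.Icc 1 G, Q k * G / (δ * B) :=
          Finset.sum_le_sum fun k _ => hFle k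
      _ = (∑ k ∈ Finset.Icc 1 G, Q k) * G / (δ * B) := by
          rw [← Finset.sum_div, ← Finset.sum_mul]
      _ ≤ B * G / (δ * B) := by
          gcongr
      _ = (G : ℝ) / δ := by field_simp
  have hFsumN : ∑ k ∈ Finset.Icc 1 G, F k ≤ ⌈(G : ℝ) / δ⌉₊ := by
    have : (↑(∑ k ∈ Finset.Icc 1 G, F k) : ℝ) ≤ (⌈(G : ℝ) / δ⌉₊ : ℝ) :=
      le_trans hFsum (Nat.le_ceil _)
    exact_mod_cast this
  have hsplit : Finset.Icc 1 G = insert 1 (Finset.Icc 2 G) := by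
    ext x; simp only [Finset.mem_Icc, Finset.mem_insert]; omega
  have h1notin : (1 : ℕ) ∉ Finset.Icc 2 G := by simp
  have hFsplit : F 1 + ∑ k ∈ Finset.Icc 2 G, F k = ∑ k ∈ Finset.Icc 1 G, F k := by
    rw [hsplit, Finset.sum_insert h1notin]
  set U : ℕ → ℕ := fun k =>
    if k = 1 then ⌈(G : ℝ) / δ⌉₊ - ∑ k ∈ Finset.Icc 2 G, F k else F k with hUdef
  have hUge : ∀ k, 1 ≤ k → k ≤ G → F k ≤ U k := by
    intro k hk1 hkG
    by_cases hk : k = 1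
    · subst hk
      simp only [hUdef, if_pos rfl]
      omega
    · simp [hUdef, hk]
  refine ⟨U, ?_, ?_⟩
  · rw [hsplit, Finset.sum_insert h1notin]
    have : ∑ k ∈ Finset.Icc 2 G, U k = ∑ k ∈ Finset.Icc 2 G, F k := by
      apply Finset.sum_congr rfl
      intro k hk
      have : k ≠ 1 := by simp only [Finset.mem_Icc] at hk; omega
      simp [hUdef, this]
    rw [this]
    simp only [hUdef, if_pos rfl]
    omega
  · intro k hk1 hkG
    set p : ℝ := (1 + δ) ^ (k - 1) with hpdef
    have hp : (0:ℝ) < p := by positivity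
    -- card bound
    have hcard : ((Y ∩ S k).card : ℝ) * (β * p) ≤ Q k := by
      have := Finset.card_nsmul_le_sum (Y ∩ S k) w (β * p) ?_
      · simpa [nsmul_eq_mul] using this
      · intro i hi
        have hiS : i ∈ S k := (Finset.mem_inter.mp hi).2
        rw [hSk k hk1 hkG] at hiS
        simp only [Finset.mem_filter] at hiS
        exact hiS.2.1.le
    have hQlt : Q k * G < ((U k : ℝ) + 1) * (δ * B) := by
      have h1 : Q k * G / (δ * B) < (F k : ℝ) + 1 := Nat.lt_floor_add_one _
      have h2 : (F k : ℝ) ≤ (U k : ℝ) := by exact_mod_cast hUge k hk1 hkG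
      have := (div_lt_iff₀ hδB).mp h1
      nlinarith
    apply Nat.le_floor
    rw [le_div_iff₀ (by positivity)]
    -- goal : card * (G * p) ≤ n * (U k + 1)
    have hmul : ((Y ∩ S k).card : ℝ) * (β * p) * G ≤ Q k * G :=
      mul_le_mul_of_nonneg_right hcard hG0.le
    nlinarith [mul_pos hβpos hp, hn0, hp]
end

section
/- Let Ω be a p-system on [n] and a_1,…,a_k a sequence built greedily so that each a_i extends {a_1,…,a_{i−1}} within Ω and the final set {a_1,…,a_k} is maximal in Ω. Suppose a monotone, subadditive cost function satisfies, for each i and for every partition class B_i ⊆ B with |B_i| ≤ p consisting of feasible single-element extensions at step i, the greedy increment bound c(G_i) − c(G_{i−1}) ≥ (1/p)·optaug(B_i | G_{i−1}). Then for every B ∈ Ω, optaug(B | G_0) ≤ (p+1)·c(G_k \ G_0). -/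
/-!
Write `optaug(X | S)` for the cheapest set `F` such that `S ∪ F` meets every requirement in `X`.
It can only drop when `S` grows, and then by at most the cost of what was added; and it is
subadditive in `X`. Hence, with `B = B₁ ∪ ⋯ ∪ Bₖ` and `G₀ ⊆ Gᵢ ⊆ Gₖ`,
`optaug(B | G₀) ≤ c(Gₖ \ G₀) + ∑ᵢ optaug(Bᵢ | Gᵢ) ≤ c(Gₖ \ G₀) + p ∑ᵢ (c(Gᵢ₊₁) - c(Gᵢ))`,
and the last sum telescopes to `c(Gₖ \ G₀)`.
-/

open Finset

theorem Finset.sum_union_le_of_nonneg {α M : Type*} [DecidableEq α] [AddCommMonoid M]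
    [PartialOrder M] [IsOrderedAddMonoid M] {f : α → M} (hf : ∀ a, 0 ≤ f a) (s t : Finset α) :
    ∑ a ∈ s ∪ t, f a ≤ ∑ a ∈ s, f a + ∑ a ∈ t, f a := by
  rw [← sum_union_inter]
  exact le_add_of_nonneg_right (sum_nonneg fun a _ => hf a)

section AugCost

variable {ι E : Type*} [DecidableEq E] {c : E → ℝ} {R : ι → Set (Finset E)}
  {X Y : Finset ι} {S T F F' : Finset E}

def IsAugmentation (R : ι → Set (Finset E)) (X : Finset ι) (S F : Finset E) : Prop :=
  ∀ i ∈ X, S ∪ F ∈ R i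

theorem IsAugmentation.mono (hR : ∀ i, IsUpperSet (R i)) (hST : S ⊆ T) (hFF' : F ⊆ F')
    (h : IsAugmentation R X S F) : IsAugmentation R X T F' :=
  fun i hi => hR i (union_subset_union hST hFF') (h i hi)

variable (c R) in
/-- `augCost c R X S` is `optaug(X | S)`. -/
noncomputable def augCost (X : Finset ι) (S : Finset E) : ℝ :=
  sInf {r : ℝ | ∃ F : Finset E, IsAugmentation R X S F ∧ r = ∑ e ∈ F, c e}

theorem augCost_nonneg (hc : ∀ e, 0 ≤ c e) : 0 ≤ augCost c R X S :=
  Real.sInf_nonneg <| by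
    rintro r ⟨F, -, rfl⟩
    exact sum_nonneg fun e _ => hc e

theorem augCost_le (hc : ∀ e, 0 ≤ c e) (hF : IsAugmentation R X S F) :
    augCost c R X S ≤ ∑ e ∈ F, c e := by
  refine csInf_le ⟨0, ?_⟩ ⟨F, hF, rfl⟩
  rintro r ⟨F', -, rfl⟩
  exact sum_nonneg fun e _ => hc e

theorem exists_sum_lt_augCost_add (hfeas : ∃ F, IsAugmentation R X S F) {ε : ℝ} (hε : 0 < ε) :
    ∃ F, IsAugmentation R X S F ∧ ∑ e ∈ F, c e < augCost c R X S + ε := by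
  obtain ⟨F₀, hF₀⟩ := hfeas
  obtain ⟨_, ⟨F, hF, rfl⟩, hlt⟩ := Real.lt_sInf_add_pos (s := {r : ℝ | ∃ F : Finset E,
    IsAugmentation R X S F ∧ r = ∑ e ∈ F, c e}) ⟨_, F₀, hF₀, rfl⟩ hε
  exact ⟨F, hF, hlt⟩

theorem augCost_empty (hc : ∀ e, 0 ≤ c e) : augCost c R ∅ S = 0 :=
  le_antisymm ((augCost_le hc (F := ∅) (by simp [IsAugmentation])).trans_eq sum_empty)
    (augCost_nonneg hc)

theorem augCost_union_le [DecidableEq ι] (hc : ∀ e, 0 ≤ c e) (hR : ∀ i, IsUpperSet (R i))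
    (hX : ∃ F, IsAugmentation R X S F) (hY : ∃ F, IsAugmentation R Y S F) :
    augCost c R (X ∪ Y) S ≤ augCost c R X S + augCost c R Y S := by
  refine le_of_forall_pos_le_add fun ε hε => ?_
  obtain ⟨FX, hFX, hcX⟩ := exists_sum_lt_augCost_add (c := c) hX (half_pos hε)
  obtain ⟨FY, hFY, hcY⟩ := exists_sum_lt_augCost_add (c := c) hY (half_pos hε)
  have hF : IsAugmentation R (X ∪ Y) S (FX ∪ FY) := by
    intro i hi
    rcases mem_union.mp hi with hi | hi
    · exact hFX.mono hR subset_rfl subset_union_left i hi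
    · exact hFY.mono hR subset_rfl subset_union_right i hi
  calc augCost c R (X ∪ Y) S ≤ ∑ e ∈ FX ∪ FY, c e := augCost_le hc hF
    _ ≤ ∑ e ∈ FX, c e + ∑ e ∈ FY, c e := sum_union_le_of_nonneg hc FX FY
    _ ≤ augCost c R X S + augCost c R Y S + ε := by linarith

theorem augCost_biUnion_le [DecidableEq ι] {κ : Type*} (hc : ∀ e, 0 ≤ c e)
    (hR : ∀ i, IsUpperSet (R i)) (hfeas : ∀ X, ∃ F, IsAugmentation R X S F) (s : Finset κ)
    (X : κ → Finset ι) : augCost c R (s.biUnion X) S ≤ ∑ j ∈ s, augCost c R (X j) S := by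
  rw [← sup_eq_biUnion]
  exact s.apply_sup_le_sum (f := (augCost c R · S)) (augCost_empty hc)
    (augCost_union_le hc hR (hfeas _) (hfeas _))

theorem augCost_anti_right (hc : ∀ e, 0 ≤ c e) (hR : ∀ i, IsUpperSet (R i))
    (hfeas : ∃ F, IsAugmentation R X S F) (hST : S ⊆ T) :
    augCost c R X T ≤ augCost c R X S := by
  refine le_of_forall_pos_le_add fun ε hε => ?_
  obtain ⟨F, hF, hcost⟩ := exists_sum_lt_augCost_add (c := c) hfeas hε
  exact (augCost_le hc (hF.mono hR hST subset_rfl)).trans hcost.le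

theorem augCost_le_sum_sdiff_add (hc : ∀ e, 0 ≤ c e) (hfeas : ∃ F, IsAugmentation R X T F)
    (hST : S ⊆ T) : augCost c R X S ≤ ∑ e ∈ T \ S, c e + augCost c R X T := by
  refine le_of_forall_pos_le_add fun ε hε => ?_
  obtain ⟨F, hF, hcost⟩ := exists_sum_lt_augCost_add (c := c) hfeas hε
  have hSF : S ∪ (T \ S ∪ F) = T ∪ F := by
    rw [← union_assoc, union_sdiff_of_subset hST]
  calc augCost c R X S ≤ ∑ e ∈ T \ S ∪ F, c e := augCost_le hc fun i hi => hSF ▸ hF i hi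
    _ ≤ ∑ e ∈ T \ S, c e + ∑ e ∈ F, c e := sum_union_le_of_nonneg hc _ _
    _ ≤ ∑ e ∈ T \ S, c e + augCost c R X T + ε := by linarith

end AugCost

/-- greedy analysis over a `p`-system. Given a chain of online
solutions `Gs 0 ⊆ … ⊆ Gs k` and, for each `B ∈ Ω`, a CCPV-style partition of `B`
into classes `Bf i` of size at most `p` satisfying the greedy increment bound,
we get `optaug(B | Gs 0) ≤ (p+1) · c(Gs k \ Gs 0)`. -/
theorem greedy_p_system_bound
    {E : Type*} [DecidableEq E] (n : ℕ)
    (c : E → ℝ) (hc : ∀ e, 0 ≤ c e)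
    (R : Fin n → Set (Finset E))
    (hup : ∀ i, ∀ A B : Finset E, A ⊆ B → A ∈ R i → B ∈ R i)
    (hfeas : ∀ (X : Finset (Fin n)) (S : Finset E),
      ∃ F : Finset E, ∀ i ∈ X, S ∪ F ∈ R i)
    (optaug : Finset (Fin n) → Finset E → ℝ)
    (hoptaug : ∀ X S, optaug X S =
      sInf {r : ℝ | ∃ F : Finset E, (∀ i ∈ X, S ∪ F ∈ R i) ∧ r = ∑ e ∈ F, c e})
    (Ω : Set (Finset (Fin n)))
    (p : ℕ) (hp : 1 ≤ p)
    (k : ℕ) (Gs : ℕ → Finset E) (hchain : Monotone Gs)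
    (hpart : ∀ B ∈ Ω, ∃ Bf : Fin k → Finset (Fin n),
      (∀ i j : Fin k, i ≠ j → Disjoint (Bf i) (Bf j)) ∧
      Finset.univ.biUnion Bf = B ∧
      (∀ i : Fin k, (Bf i).card ≤ p) ∧
      (∀ i : Fin k, (1 / (p : ℝ)) * optaug (Bf i) (Gs i) ≤
        (∑ e ∈ Gs (i + 1), c e) - ∑ e ∈ Gs i, c e)) :
    ∀ B ∈ Ω, optaug B (Gs 0) ≤ ((p : ℝ) + 1) * ∑ e ∈ Gs k \ Gs 0, c e := by
  obtain rfl : optaug = augCost c R := funext₂ hoptaug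
  intro B hB
  obtain ⟨Bf, -, rfl, -, hinc⟩ := hpart B hB
  have hstep (i : Fin k) : augCost c R (Bf i) (Gs i) ≤
      p * ((∑ e ∈ Gs (i + 1), c e) - ∑ e ∈ Gs i, c e) := by
    rw [← div_le_iff₀' (by exact_mod_cast hp), ← one_div_mul_eq_div]
    exact hinc i
  have hG0k : Gs 0 ⊆ Gs k := hchain k.zero_le
  calc augCost c R (univ.biUnion Bf) (Gs 0)
      ≤ ∑ e ∈ Gs k \ Gs 0, c e + augCost c R (univ.biUnion Bf) (Gs k) :=
        augCost_le_sum_sdiff_add hc (hfeas _ _) hG0k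
    _ ≤ ∑ e ∈ Gs k \ Gs 0, c e + ∑ i, augCost c R (Bf i) (Gs k) := by
        gcongr
        exact augCost_biUnion_le hc hup (hfeas · _) _ _
    _ ≤ ∑ e ∈ Gs k \ Gs 0, c e + ∑ i, augCost c R (Bf i) (Gs i) := by
        gcongr with i
        exact augCost_anti_right hc hup (hfeas _ _) (hchain i.is_lt.le)
    _ ≤ ∑ e ∈ Gs k \ Gs 0, c e +
          ∑ i : Fin k, p * ((∑ e ∈ Gs (i + 1), c e) - ∑ e ∈ Gs i, c e) := by
        gcongr with i
        exact hstep i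
    _ = ((p : ℝ) + 1) * ∑ e ∈ Gs k \ Gs 0, c e := by
        rw [← mul_sum,
          Fin.sum_univ_eq_sum_range (fun i => (∑ e ∈ Gs (i + 1), c e) - ∑ e ∈ Gs i, c e),
          sum_range_sub (fun i => ∑ e ∈ Gs i, c e), ← sum_sdiff_eq_sub hG0k]
        ring
end

section
/- Reduction loss for q-knapsack uncertainty sets: let Ω be the intersection of a p-system and a q-knapsack, and Σ ⊇ Ω a family such that every τ ∈ Σ can be partitioned into at most 3q+1 sets each in Ω. Then for a subadditive augmentation cost, any α-approximate solution to the robust problem with uncertainty set Σ is a (3q+1)·α-approximate solution to the robust problem with uncertainty set Ω. -/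
/-- reduction loss for `q`-knapsack uncertainty sets. If `Ω ⊆ Sig`
and every scenario in `Sig` splits into at most `3q+1` scenarios of `Ω`, then any
`α`-approximate solution for the robust problem over `Sig` is a `(3q+1)·α`-
approximate solution for the robust problem over `Ω`. -/
theorem reduction_loss_q_knapsack
    {E : Type*} (n q : ℕ)
    (c : Finset E → ℝ) (lam α Tstar TSig optSig : ℝ)
    (Ω Sig : Set (Finset (Fin n)))
    (optaug : Finset (Fin n) → Finset E → ℝ)
    (hOmSig : Ω ⊆ Sig)
    (hsub : ∀ (ω : Fin (3 * q + 1) → Finset (Fin n)) (S : Finset E),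
      optaug (Finset.univ.biUnion ω) S ≤ ∑ ℓ : Fin (3 * q + 1), optaug (ω ℓ) S)
    (hpartition : ∀ τ ∈ Sig, ∃ ω : Fin (3 * q + 1) → Finset (Fin n),
      Finset.univ.biUnion ω = τ ∧ ∀ ℓ, ω ℓ ∈ Ω)
    (E0star E0 : Finset E)
    (hc0 : 0 ≤ c E0star) (hlam : 0 ≤ lam) (hTstar : 0 ≤ Tstar) (hα : 1 ≤ α)
    -- `E0star` with second-stage cost `Tstar` is the optimal solution for `Ω`
    (hstar : ∀ ω ∈ Ω, optaug ω E0star ≤ Tstar)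
    -- `optSig` is the optimal value of the robust problem over `Sig`
    (hoptSig : ∀ (F : Finset E) (T : ℝ), (∀ τ ∈ Sig, optaug τ F ≤ T) →
      optSig ≤ c F + lam * T)
    -- `(E0, TSig)` is an `α`-approximate solution for `Sig`
    (hfeasSig : ∀ τ ∈ Sig, optaug τ E0 ≤ TSig)
    (happrox : c E0 + lam * TSig ≤ α * optSig) :
    (∀ ω ∈ Ω, optaug ω E0 ≤ TSig) ∧
    c E0 + lam * TSig ≤ ((3 * q + 1 : ℕ) : ℝ) * α * (c E0star + lam * Tstar) := by
  constructor
  · exact fun ω hω => hfeasSig ω (hOmSig hω)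
  · set K : ℝ := ((3 * q + 1 : ℕ) : ℝ) with hK
    have hK1 : (1 : ℝ) ≤ K := by
      simp only [hK]
      exact_mod_cast Nat.one_le_iff_ne_zero.mpr (by omega)
    have hfeas : ∀ τ ∈ Sig, optaug τ E0star ≤ K * Tstar := by
      intro τ hτ
      obtain ⟨ω, hω, hωΩ⟩ := hpartition τ hτ
      calc optaug τ E0star = optaug (Finset.univ.biUnion ω) E0star := by rw [hω]
        _ ≤ ∑ ℓ : Fin (3 * q + 1), optaug (ω ℓ) E0star := hsub ω E0star
        _ ≤ ∑ _ℓ : Fin (3 * q + 1), Tstar :=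
            Finset.sum_le_sum fun ℓ _ => hstar (ω ℓ) (hωΩ ℓ)
        _ = K * Tstar := by simp [hK, mul_comm]
    have h1 : optSig ≤ c E0star + lam * (K * Tstar) := hoptSig E0star (K * Tstar) hfeas
    have h2 : c E0star + lam * (K * Tstar) ≤ K * (c E0star + lam * Tstar) := by
      nlinarith [mul_nonneg hlam hTstar]
    have hα0 : (0:ℝ) ≤ α := le_trans zero_le_one hα
    calc c E0 + lam * TSig ≤ α * optSig := happrox
      _ ≤ α * (K * (c E0star + lam * Tstar)) :=
          mul_le_mul_of_nonneg_left (le_trans h1 h2) hα0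
      _ = K * α * (c E0star + lam * Tstar) := by ring
end
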